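/- Lemma 5.14(4): For every real λ > 0, μ_MB(h) − μ_λ(h) = Σ_{m ≥ 1} N_m(λ)·(h m − h (−m)), where N_m(λ) := 2·card{j ∈ ℤ : 0 < j < m·λ} + card{j ∈ ℤ : (j : ℝ) = m·λ} is the number of integers in the interval (0, mλ] counted with multiplicity two at interior points and multiplicity one at the endpoint. -/
import Mathlib


open scoped Classical

/-- The function `𝕎 : ℝ → ℤ`, equal to `2x` if `x ∈ ℤ` and `2⌊x⌋ + 1` otherwise. -/
noncomputable def Wfun (x : ℝ) : ℤ :=
  if Int.fract x = 0 then 2 * ⌊x⌋ else 2 * ⌊x⌋ + 1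

/-- The index `μ_λ(h) = Σ_{k ≠ 0} (1 − 𝕎(λ·k))·(h k)`. -/
noncomputable def muLam (l : ℝ) (h : ℤ →₀ ℕ) : ℤ :=
  ∑ k ∈ h.support.filter (fun k => k ≠ 0), (1 - Wfun (l * k)) * (h k : ℤ)

/-- The Morse–Bott index `μ_MB(h) = 2·Σ_{k < 0} h k`. -/
def muMB (h : ℤ →₀ ℕ) : ℤ := 2 * ∑ k ∈ h.support.filter (fun k => k < 0), (h k : ℤ)

/-- `N_m(λ)`: the double-count of integers in `(0, mλ]`, i.e. twice the number of integers `j`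
with `0 < j < mλ`, plus the number of integers equal to `mλ`. -/
noncomputable def Ncount (m : ℤ) (l : ℝ) : ℤ :=
  2 * (Nat.card {j : ℤ // 0 < j ∧ (j : ℝ) < (m : ℝ) * l} : ℤ) +
    (Nat.card {j : ℤ // (j : ℝ) = (m : ℝ) * l} : ℤ)

lemma fract_zero_eq_floor {x : ℝ} (h : Int.fract x = 0) : x = (⌊x⌋ : ℝ) := by
  have := Int.fract_add_floor x; rw [h] at this; linarith

lemma ceil_of_fract_ne {x : ℝ} (h : Int.fract x ≠ 0) : ⌈x⌉ = ⌊x⌋ + 1 := by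
  rcases Int.fract_eq_zero_or_add_one_sub_ceil x with h0 | h1
  · exact absurd h0 h
  · have hf : Int.fract x = x - ⌊x⌋ := (Int.self_sub_floor x).symm
    have : (⌈x⌉ : ℝ) = (⌊x⌋ : ℝ) + 1 := by rw [hf] at h1; linarith
    exact_mod_cast this

lemma Wfun_neg (x : ℝ) : Wfun (-x) = -Wfun x := by
  unfold Wfun
  by_cases hx : Int.fract x = 0
  · rw [if_pos hx, if_pos (Int.fract_neg_eq_zero.mpr hx)]
    have : x = (⌊x⌋ : ℝ) := fract_zero_eq_floor hx
    rw [this, ← Int.cast_neg, Int.floor_intCast, Int.floor_intCast]; ring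
  · rw [if_neg hx, if_neg (fun hc => hx (Int.fract_neg_eq_zero.mp hc))]
    rw [Int.floor_neg, ceil_of_fract_ne hx]; ring

lemma card_lt_aux (x : ℝ) (hx : 0 < x) :
    (Nat.card {j : ℤ // 0 < j ∧ (j : ℝ) < x} : ℤ) = ⌈x⌉ - 1 := by
  have e : ∀ j : ℤ, (0 < j ∧ (j : ℝ) < x) ↔ j ∈ Finset.Ioo 0 ⌈x⌉ := by
    intro j; simp [Int.lt_ceil]
  rw [Nat.card_congr (Equiv.subtypeEquivRight e), Nat.card_eq_finsetCard, Int.card_Ioo]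
  have h1 : (1 : ℤ) ≤ ⌈x⌉ := by
    have : (0 : ℤ) < ⌈x⌉ := Int.lt_ceil.mpr (by exact_mod_cast hx)
    omega
  omega

lemma card_eq_aux (x : ℝ) :
    (Nat.card {j : ℤ // (j : ℝ) = x} : ℤ) = if Int.fract x = 0 then 1 else 0 := by
  by_cases hx : Int.fract x = 0
  · rw [if_pos hx]
    have hx' : x = (⌊x⌋ : ℝ) := fract_zero_eq_floor hx
    have e : ∀ j : ℤ, ((j : ℝ) = x) ↔ j = ⌊x⌋ := by
      intro j
      constructor
      · intro hj; exact_mod_cast hj.trans hx'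
      · intro hj; rw [hj, ← hx']
    rw [Nat.card_congr (Equiv.subtypeEquivRight e)]
    simp
  · rw [if_neg hx]
    have : IsEmpty {j : ℤ // (j : ℝ) = x} := by
      constructor; rintro ⟨j, hj⟩
      apply hx; rw [← hj, Int.fract_intCast]
    simp [Nat.card_of_isEmpty]

lemma Ncount_eq (m : ℤ) (l : ℝ) (hm : 1 ≤ m) (hl : 0 < l) :
    Ncount m l = Wfun ((m : ℝ) * l) - 1 := by
  set x : ℝ := (m : ℝ) * l with hxdef
  have hx : 0 < x := mul_pos (by exact_mod_cast hm.trans_lt' (by norm_num) : (0:ℝ) < m) hl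
  unfold Ncount Wfun
  rw [← hxdef, card_lt_aux x hx, card_eq_aux x]
  by_cases hf : Int.fract x = 0
  · rw [if_pos hf, if_pos hf]
    have : ⌈x⌉ = ⌊x⌋ := by
      rw [fract_zero_eq_floor hf]; simp
    omega
  · rw [if_neg hf, if_neg hf, ceil_of_fract_ne hf]; ring

/-- Lemma 5.14(4): for every real `λ > 0`,
`μ_MB(h) − μ_λ(h) = Σ_{m ≥ 1} N_m(λ)·(h m − h (−m))`.
The sum over `m ≥ 1` is finite (terms vanish beyond the largest absolute weight). -/
theorem muMB_sub_muLam_eq_sum_Ncount (h : ℤ →₀ ℕ) (l : ℝ) (hl : 0 < l) :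
    muMB h - muLam l h =
      ∑ m ∈ Finset.Icc (1 : ℤ) ((h.support.sup Int.natAbs : ℕ) : ℤ),
        Ncount m l * ((h m : ℤ) - (h (-m) : ℤ)) := by
  classical
  set B : ℤ := ((h.support.sup Int.natAbs : ℕ) : ℤ) with hB
  have hsupp : ∀ k ∈ h.support, -B ≤ k ∧ k ≤ B := by
    intro k hk
    have h1 : k.natAbs ≤ h.support.sup Int.natAbs := Finset.le_sup hk
    have h2 : (k.natAbs : ℤ) ≤ B := by rw [hB]; exact_mod_cast h1
    omega
  have hmuLam : muLam l h =
      ∑ k ∈ (Finset.Icc (-B) B).erase 0, (1 - Wfun (l * k)) * (h k : ℤ) := by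
    rw [muLam]
    apply Finset.sum_subset
    · intro k hk
      rw [Finset.mem_filter] at hk
      obtain ⟨hks, hk0⟩ := hk
      have := hsupp k hks
      simp only [Finset.mem_erase, Finset.mem_Icc]
      exact ⟨hk0, this.1, this.2⟩
    · intro k hk hnk
      have hk0 : k ≠ 0 := (Finset.mem_erase.mp hk).1
      have : k ∉ h.support := fun hc => hnk (Finset.mem_filter.mpr ⟨hc, hk0⟩)
      rw [Finsupp.notMem_support_iff.mp this]; simp
  have hmuMB : muMB h = 2 * ∑ k ∈ Finset.Icc (-B) (-1), (h k : ℤ) := by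
    rw [muMB]; congr 1
    apply Finset.sum_subset
    · intro k hk
      rw [Finset.mem_filter] at hk
      obtain ⟨hks, hk0⟩ := hk
      have := hsupp k hks
      rw [Finset.mem_Icc]; omega
    · intro k hk hnk
      rw [Finset.mem_Icc] at hk
      have hk0 : k < 0 := by omega
      have : k ∉ h.support := fun hc => hnk (Finset.mem_filter.mpr ⟨hc, hk0⟩)
      rw [Finsupp.notMem_support_iff.mp this]; simp
  have hsplit : (Finset.Icc (-B) B).erase 0 = Finset.Icc (-B) (-1) ∪ Finset.Icc 1 B := by
    ext k
    simp only [Finset.mem_erase, Finset.mem_Icc, Finset.mem_union]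
    omega
  have hdisj : Disjoint (Finset.Icc (-B) (-1)) (Finset.Icc 1 B) := by
    rw [Finset.disjoint_left]
    intro k hk hk'
    rw [Finset.mem_Icc] at hk hk'
    omega
  have hmap : Finset.Icc (-B) (-1) = (Finset.Icc 1 B).map ⟨Neg.neg, neg_injective⟩ := by
    ext k
    simp only [Finset.mem_map, Finset.mem_Icc, Function.Embedding.coeFn_mk]
    constructor
    · intro hk; exact ⟨-k, ⟨by omega, by omega⟩, by omega⟩
    · rintro ⟨a, ha, rfl⟩; omega
  rw [hmuMB, hmuLam, hsplit, Finset.sum_union hdisj, hmap, Finset.sum_map, Finset.sum_map]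
  simp only [Function.Embedding.coeFn_mk]
  rw [Finset.mul_sum, ← Finset.sum_add_distrib, ← Finset.sum_sub_distrib]
  apply Finset.sum_congr rfl
  intro m hm
  rw [Finset.mem_Icc] at hm
  rw [Ncount_eq m l hm.1 hl]
  have hcast : ((-m : ℤ) : ℝ) = -(m : ℝ) := by push_cast; ring
  have hWm : Wfun (l * ((-m : ℤ) : ℝ)) = -Wfun ((m : ℝ) * l) := by
    rw [hcast, show l * -(m : ℝ) = -((m : ℝ) * l) by ring, Wfun_neg]
  rw [hWm, mul_comm l ((m : ℤ) : ℝ)]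
  ring
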